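/- arXiv:cs/0204002 — 3 statements merged into one kernel-verified Lean document; each statement's English description precedes it below -/
import Mathlib

section
/- If a token-moving puzzle with the 2-adjacency restriction is solvable (configuration A can be re-arranged into configuration B), then adding one additional unlabeled token to A (at any unoccupied position) yields a puzzle in which some configuration containing B (i.e., B plus the extra token somewhere) is still reachable. -/
/-- A valid 2-adjacent move on board `G`: take a token at `q ∈ C`, place it at an
unoccupied `p` adjacent to at least 2 tokens of `C` other than `q`. -/
def ValidMove {P : Type*} [DecidableEq P] (G : SimpleGraph P) (C C' : Finset P) : Prop :=
  ∃ q ∈ C, ∃ p, p ∉ C ∧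
    (∃ a ∈ C.erase q, ∃ b ∈ C.erase q, a ≠ b ∧ G.Adj p a ∧ G.Adj p b) ∧
    C' = insert p (C.erase q)

/-- Reachability by a finite sequence of valid 2-adjacent moves. -/
def Reach {P : Type*} [DecidableEq P] (G : SimpleGraph P) : Finset P → Finset P → Prop :=
  Relation.ReflTransGen (ValidMove G)

/-!
Carry the extra token along passively. A move whose target square `p` is not the extra
token's square is still valid, since the extra token only adds neighbours. If the move
targets the extra token's square, no move is needed: since tokens are unlabeled, the current
configuration already is the target one plus an extra token on the vacated square `q`.
-/

lemma ValidMove.exists_reach_insert {P : Type*} [DecidableEq P] {G : SimpleGraph P}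
    {C C' : Finset P} (h : ValidMove G C C') {x : P} (hx : x ∉ C) :
    ∃ y ∉ C', Reach G (insert x C) (insert y C') := by
  obtain ⟨q, hq, p, hp, ⟨a, ha, b, hb, hab, hpa, hpb⟩, rfl⟩ := h
  have hxq : x ≠ q := by rintro rfl; exact hx hq
  by_cases hxp : x = p
  · subst hxp
    refine ⟨q, by simp [hxq.symm], ?_⟩
    rw [Finset.insert_comm, Finset.insert_erase hq]
    exact .refl
  · refine ⟨x, by simp [hxp, hx], .single ?_⟩
    have hmove : ValidMove G (insert x C) (insert p ((insert x C).erase q)) :=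
      ⟨q, Finset.mem_insert_of_mem hq, p, by simp [Ne.symm hxp, hp],
        ⟨a, by simp_all, b, by simp_all, hab, hpa, hpb⟩, rfl⟩
    rwa [Finset.erase_insert_of_ne hxq, Finset.insert_comm] at hmove

/-- Adding one additional unlabeled token cannot hurt: if `B` is reachable from `A`,
then from `A` plus an extra token at any unoccupied position `e`, some configuration
consisting of `B` plus the extra token somewhere is still reachable. -/
theorem extra_token_emulation {P : Type*} [DecidableEq P] (G : SimpleGraph P)
    (A B : Finset P) (h : Reach G A B) (e : P) (he : e ∉ A) :
    ∃ e', e' ∉ B ∧ Reach G (insert e A) (insert e' B) := by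
  induction h with
  | refl => exact ⟨e, he, .refl⟩
  | tail _ hmove ih =>
    obtain ⟨e', he', hreach⟩ := ih
    obtain ⟨e'', he'', hreach'⟩ := hmove.exists_reach_insert he'
    exact ⟨e'', he'', hreach.trans hreach'⟩
end

section
/- If a configuration C is span-minimal (removal of any token strictly reduces the span), then every valid 2-adjacent move from C strictly reduces the span: for any valid move from C producing C', span(C') ⊊ span(C). -/
/-- The span of a set of positions: the least superset closed under adding any
vertex adjacent to at least 2 vertices of the set. -/
def Span {P : Type*} (G : SimpleGraph P) (C : Set P) : Set P :=
  ⋂₀ {S : Set P | C ⊆ S ∧ ∀ p, (∃ a ∈ S, ∃ b ∈ S, a ≠ b ∧ G.Adj p a ∧ G.Adj p b) → p ∈ S}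

/-!
The token moved to `p` is adjacent to two tokens that stay, so `p` already lies in the span of
`C \ {q}`; hence the new configuration spans exactly what `C \ {q}` spans, and span-minimality
makes that strictly smaller than the span of `C`.
-/

section Span

variable {P : Type*} (G : SimpleGraph P)

lemma subset_span (C : Set P) : C ⊆ Span G C :=
  fun _ hx _ hS ↦ hS.1 hx

lemma span_subset_of_closed {C S : Set P} (hCS : C ⊆ S)
    (hS : ∀ p, (∃ a ∈ S, ∃ b ∈ S, a ≠ b ∧ G.Adj p a ∧ G.Adj p b) → p ∈ S) :
    Span G C ⊆ S :=
  Set.sInter_subset_of_mem ⟨hCS, hS⟩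

lemma mem_span_of_adj {C : Set P} {p a b : P} (ha : a ∈ Span G C) (hb : b ∈ Span G C)
    (hab : a ≠ b) (hpa : G.Adj p a) (hpb : G.Adj p b) : p ∈ Span G C :=
  fun S hS ↦ hS.2 p ⟨a, ha S hS, b, hb S hS, hab, hpa, hpb⟩

lemma span_mono {C D : Set P} (h : C ⊆ D) : Span G C ⊆ Span G D :=
  span_subset_of_closed G (h.trans (subset_span G D))
    fun _ ⟨_, ha, _, hb, hab, hpa, hpb⟩ ↦ mem_span_of_adj G ha hb hab hpa hpb

lemma span_insert_of_adj {C : Set P} {p a b : P} (ha : a ∈ C) (hb : b ∈ C) (hab : a ≠ b)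
    (hpa : G.Adj p a) (hpb : G.Adj p b) : Span G (insert p C) = Span G C := by
  refine (span_subset_of_closed G ?_ ?_).antisymm (span_mono G (Set.subset_insert p C))
  · exact Set.insert_subset
      (mem_span_of_adj G (subset_span G C ha) (subset_span G C hb) hab hpa hpb) (subset_span G C)
  · exact fun _ ⟨_, ha, _, hb, hab, hpa, hpb⟩ ↦ mem_span_of_adj G ha hb hab hpa hpb

end Span

/-- If a configuration is span-minimal (removing any token strictly reduces the span),
then every valid move strictly reduces the span. -/
theorem spanMinimal_move_reduces_span {P : Type*} [DecidableEq P] (G : SimpleGraph P)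
    (C : Finset P) (hmin : ∀ t ∈ C, Span G (↑C \ {t}) ≠ Span G ↑C)
    (C' : Finset P) (h : ValidMove G C C') : Span G ↑C' ⊂ Span G ↑C := by
  obtain ⟨q, hq, p, -, ⟨a, ha, b, hb, hab, hpa, hpb⟩, rfl⟩ := h
  have hC' : Span G ↑(insert p (C.erase q)) = Span G (↑C \ {q}) := by
    rw [Finset.coe_insert, span_insert_of_adj G (Finset.mem_coe.2 ha) (Finset.mem_coe.2 hb) hab
      hpa hpb, Finset.coe_erase]
  rw [hC']
  exact (span_mono G Set.sdiff_subset).ssubset_of_ne (hmin q hq)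
end

section
/- On the triangular grid, if a configuration C has a valid 2-adjacent move, then after at most 2 valid moves one can reach a configuration containing three mutually adjacent coins (a triangle). -/
/-- The triangular grid on ℤ²: `(x,y)` is adjacent to `(x±1,y)`, `(x,y±1)`,
`(x+1,y−1)`, `(x−1,y+1)`; equivalently `a² + ab + b² = 1` for the difference `(a,b)`. -/
def TriGrid : SimpleGraph (ℤ × ℤ) where
  Adj p q := (p.1 - q.1)^2 + (p.1 - q.1) * (p.2 - q.2) + (p.2 - q.2)^2 = 1
  symm := ⟨by intro p q h; linear_combination h⟩
  loopless := ⟨by intro p; simp⟩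

/-! Let the first move land on `p`, next to two coins `a ≠ b`. Rotating `a` by 60° about `p`
gives a site `r` adjacent to both. If `r` is occupied, `r p a` is already a triangle; otherwise
`r` sees the two coins `p` and `a`, so moving `b` to `r` creates the triangle `r p a`. -/

theorem validMove_insert_erase {P : Type*} [DecidableEq P] {G : SimpleGraph P}
    {C : Finset P} {q p a b : P} (hq : q ∈ C) (hp : p ∉ C) (ha : a ∈ C.erase q)
    (hb : b ∈ C.erase q) (hab : a ≠ b) (hpa : G.Adj p a) (hpb : G.Adj p b) :
    ValidMove G C (insert p (C.erase q)) :=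
  ⟨q, hq, p, hp, ⟨a, ha, b, hb, hab, hpa, hpb⟩, rfl⟩

theorem TriGrid.exists_adj_adj_of_adj {p a : ℤ × ℤ} (h : TriGrid.Adj p a) :
    ∃ r, TriGrid.Adj r p ∧ TriGrid.Adj r a := by
  have h' : (p.1 - a.1)^2 + (p.1 - a.1) * (p.2 - a.2) + (p.2 - a.2)^2 = 1 := h
  refine ⟨(p.1 - (a.2 - p.2), p.2 + (a.1 - p.1) + (a.2 - p.2)), ?_, ?_⟩ <;>
    show _ = (1 : ℤ) <;> linear_combination h'

/-- On the triangular grid, if a configuration has a valid move, then after at most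
two valid moves one can reach a configuration containing a triangle. -/
theorem tri_make_triangle (C : Finset (ℤ × ℤ)) (h : ∃ C', ValidMove TriGrid C C') :
    ∃ C' : Finset (ℤ × ℤ),
      (C' = C ∨ ValidMove TriGrid C C' ∨
        ∃ D, ValidMove TriGrid C D ∧ ValidMove TriGrid D C') ∧
      ∃ a ∈ C', ∃ b ∈ C', ∃ c ∈ C',
        TriGrid.Adj a b ∧ TriGrid.Adj b c ∧ TriGrid.Adj a c := by
  obtain ⟨_, q, hq, p, hp, ⟨a, ha, b, hb, hab, hpa, hpb⟩, -⟩ := h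
  set D := insert p (C.erase q)
  have move₁ : ValidMove TriGrid C D := validMove_insert_erase hq hp ha hb hab hpa hpb
  have hpD : p ∈ D := Finset.mem_insert_self _ _
  have haD : a ∈ D := Finset.mem_insert_of_mem ha
  have hbD : b ∈ D := Finset.mem_insert_of_mem hb
  have hbp : b ≠ p := fun h => hp (h ▸ Finset.mem_of_mem_erase hb)
  obtain ⟨r, hrp, hra⟩ := TriGrid.exists_adj_adj_of_adj hpa
  by_cases hrD : r ∈ D
  · exact ⟨D, .inr (.inl move₁), r, hrD, p, hpD, a, haD, hrp, hpa, hra⟩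
  have hpD' : p ∈ D.erase b := Finset.mem_erase.2 ⟨hbp.symm, hpD⟩
  have haD' : a ∈ D.erase b := Finset.mem_erase.2 ⟨hab, haD⟩
  have move₂ : ValidMove TriGrid D (insert r (D.erase b)) :=
    validMove_insert_erase hbD hrD hpD' haD' hpa.ne hrp hra
  exact ⟨_, .inr (.inr ⟨D, move₁, move₂⟩), r, Finset.mem_insert_self _ _,
    p, Finset.mem_insert_of_mem hpD', a, Finset.mem_insert_of_mem haD', hrp, hpa, hra⟩
end
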